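/- arXiv:1902.00509 — 6 statements merged into one kernel-verified Lean document; each statement's English description precedes it below -/
import Mathlib

section
/- Let E be a measurable space, μ a probability measure on E, V a bounded measurable function on E, and W̃ : E × E → [0,∞) a bounded measurable kernel density. Define the operator L̃_μ acting on bounded measurable f by L̃_μ(f)(x) = ∫_E W̃(x,y)(f(y) − f(x)) μ(dy). Then μ(L̃_μ(f)) = μ(V·f) − μ(f)·μ(V) for all bounded measurable f if and only if ∫_E (W̃(y,x) − W̃(x,y)) μ(dy) = V(x) − μ(V) for μ-almost every x. -/
open MeasureTheory

private lemma intbdd {α : Type*} [MeasurableSpace α] (μ : Measure α) [IsFiniteMeasure μ]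
    {f : α → ℝ} (hf : AEStronglyMeasurable f μ) {C : ℝ} (h : ∀ x, |f x| ≤ C) :
    Integrable f μ :=
  ⟨hf, HasFiniteIntegral.of_bounded (C := C) (Filter.Eventually.of_forall h)⟩

/-- The selection generator `L̃_μ f x = ∫ W̃(x,y)(f y - f x) μ(dy)` satisfies
`μ(L̃_μ f) = μ(V f) - μ(f) μ(V)` for all bounded measurable `f` iff
`∫ (W̃(y,x) - W̃(x,y)) μ(dy) = V x - μ(V)` for μ-a.e. `x`. -/
theorem stmt0 {E : Type*} [MeasurableSpace E] (μ : Measure E) [IsProbabilityMeasure μ]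
    (V : E → ℝ) (hVmeas : Measurable V) (hVbd : ∃ C, ∀ x, |V x| ≤ C)
    (W : E → E → ℝ) (hWmeas : Measurable (Function.uncurry W))
    (hWpos : ∀ x y, 0 ≤ W x y) (hWbd : ∃ C, ∀ x y, W x y ≤ C) :
    (∀ f : E → ℝ, Measurable f → (∃ C, ∀ x, |f x| ≤ C) →
      ∫ x, (∫ y, W x y * (f y - f x) ∂μ) ∂μ
        = ∫ x, V x * f x ∂μ - (∫ x, f x ∂μ) * (∫ x, V x ∂μ)) ↔
    (∀ᵐ x ∂μ, ∫ y, (W y x - W x y) ∂μ = V x - ∫ y, V y ∂μ) := by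
  obtain ⟨CW, hCW⟩ := hWbd
  obtain ⟨CV, hCV⟩ := hVbd
  have hne : Nonempty E := by
    by_contra hcon
    have h0 : μ Set.univ = 1 := measure_univ
    rw [Set.univ_eq_empty_iff.mpr (not_nonempty_iff.mp hcon)] at h0
    simp at h0
  obtain ⟨x0⟩ := hne
  have hCW0 : 0 ≤ CW := le_trans (hWpos x0 x0) (hCW x0 x0)
  set c : ℝ := ∫ x, V x ∂μ with hc
  set G : E → ℝ := fun x => ∫ y, (W y x - W x y) ∂μ with hGdef
  -- basic measurability
  have hWx : ∀ x, Measurable (fun y => W x y) := fun x => hWmeas.of_uncurry_left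
  have hWy : ∀ x, Measurable (fun y => W y x) := fun x => hWmeas.of_uncurry_right
  have hWabs : ∀ x y, |W x y| ≤ CW := fun x y => by
    rw [abs_of_nonneg (hWpos x y)]; exact hCW x y
  -- integrability of the W slices
  have hintW : ∀ x, Integrable (fun y => W x y) μ := fun x =>
    intbdd μ (hWx x).aestronglyMeasurable (fun y => hWabs x y)
  have hintW' : ∀ x, Integrable (fun y => W y x) μ := fun x =>
    intbdd μ (hWy x).aestronglyMeasurable (fun y => hWabs y x)
  -- G is measurable
  have hGsm : StronglyMeasurable (fun p : E × E => W p.2 p.1 - W p.1 p.2) := by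
    have h1 : Measurable (fun p : E × E => W p.2 p.1) := hWmeas.comp measurable_swap
    exact (h1.sub hWmeas).stronglyMeasurable
  have hGmeas : Measurable G := hGsm.integral_prod_right'.measurable
  -- bounds on the marginal integrals
  have hmargin_le : ∀ g : E → ℝ, (∀ y, 0 ≤ g y) → (∀ y, g y ≤ CW) → Integrable g μ →
      0 ≤ ∫ y, g y ∂μ ∧ ∫ y, g y ∂μ ≤ CW := by
    intro g h0 h1 hint
    constructor
    · exact integral_nonneg h0
    · calc ∫ y, g y ∂μ ≤ ∫ _, CW ∂μ := integral_mono hint (integrable_const _) h1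
        _ = CW := by simp
  have hGbd : ∀ x, |G x| ≤ CW := by
    intro x
    have e : G x = (∫ y, W y x ∂μ) - ∫ y, W x y ∂μ := integral_sub (hintW' x) (hintW x)
    obtain ⟨h1, h2⟩ := hmargin_le (fun y => W y x) (fun y => hWpos y x) (fun y => hCW y x) (hintW' x)
    obtain ⟨h3, h4⟩ := hmargin_le (fun y => W x y) (fun y => hWpos x y) (fun y => hCW x y) (hintW x)
    rw [e, abs_sub_le_iff]
    constructor <;> linarith
  -- the key computation: the double integral equals ∫ f * G
  have key : ∀ f : E → ℝ, Measurable f → ∀ Cf : ℝ, (∀ x, |f x| ≤ Cf) →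
      ∫ x, (∫ y, W x y * (f y - f x) ∂μ) ∂μ = ∫ x, f x * G x ∂μ := by
    intro f hf Cf hCf
    have hCf0 : 0 ≤ Cf := le_trans (abs_nonneg _) (hCf x0)
    have hWfprod : Integrable (fun p : E × E => W p.1 p.2 * f p.2) (μ.prod μ) := by
      refine intbdd (μ.prod μ) ((hWmeas.mul (hf.comp measurable_snd)).aestronglyMeasurable)
        (C := CW * Cf) ?_
      intro p
      rw [abs_mul]
      exact mul_le_mul (hWabs _ _) (hCf _) (abs_nonneg _) hCW0
    have hint1 : ∀ x, Integrable (fun y => W x y * f y) μ := fun x =>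
      intbdd μ (((hWx x).mul hf).aestronglyMeasurable) (C := CW * Cf)
        (fun y => by rw [abs_mul]; exact mul_le_mul (hWabs _ _) (hCf _) (abs_nonneg _) hCW0)
    -- split the inner integral
    have inner : ∀ x, (∫ y, W x y * (f y - f x) ∂μ)
        = (∫ y, W x y * f y ∂μ) - (∫ y, W x y ∂μ) * f x := by
      intro x
      have e : (fun y => W x y * (f y - f x)) = fun y => W x y * f y - W x y * f x := by
        funext y; ring
      rw [e, integral_sub (hint1 x) ((hintW x).mul_const _), integral_mul_const]
    have hintA : Integrable (fun x => ∫ y, W x y * f y ∂μ) μ := hWfprod.integral_prod_left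
    have hintB : Integrable (fun x => (∫ y, W x y ∂μ) * f x) μ := by
      refine intbdd μ ?_ (C := CW * Cf) ?_
      · have hm : Measurable (fun x => ∫ y, W x y ∂μ) :=
          hWmeas.stronglyMeasurable.integral_prod_right'.measurable
        exact (hm.mul hf).aestronglyMeasurable
      · intro x
        rw [abs_mul]
        refine mul_le_mul ?_ (hCf x) (abs_nonneg _) hCW0
        obtain ⟨h1, h2⟩ := hmargin_le (fun y => W x y) (fun y => hWpos x y) (fun y => hCW x y) (hintW x)
        rw [abs_of_nonneg h1]; exact h2
    have hintB' : Integrable (fun x => (∫ y, W y x ∂μ) * f x) μ := by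
      refine intbdd μ ?_ (C := CW * Cf) ?_
      · have hm : Measurable (fun x => ∫ y, W y x ∂μ) :=
          ((hWmeas.comp measurable_swap).stronglyMeasurable.integral_prod_right').measurable
        exact (hm.mul hf).aestronglyMeasurable
      · intro x
        rw [abs_mul]
        refine mul_le_mul ?_ (hCf x) (abs_nonneg _) hCW0
        obtain ⟨h1, h2⟩ := hmargin_le (fun y => W y x) (fun y => hWpos y x) (fun y => hCW y x) (hintW' x)
        rw [abs_of_nonneg h1]; exact h2
    calc ∫ x, (∫ y, W x y * (f y - f x) ∂μ) ∂μ
        = ∫ x, ((∫ y, W x y * f y ∂μ) - (∫ y, W x y ∂μ) * f x) ∂μ := by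
          exact integral_congr_ae (Filter.Eventually.of_forall inner)
      _ = (∫ x, ∫ y, W x y * f y ∂μ ∂μ) - ∫ x, (∫ y, W x y ∂μ) * f x ∂μ :=
          integral_sub hintA hintB
      _ = (∫ x, (∫ y, W y x ∂μ) * f x ∂μ) - ∫ x, (∫ y, W x y ∂μ) * f x ∂μ := by
          congr 1
          rw [integral_integral_swap (f := fun x y => W x y * f y) hWfprod]
          refine integral_congr_ae (Filter.Eventually.of_forall fun y => ?_)
          exact integral_mul_const (f y) (fun x => W x y)
      _ = ∫ x, ((∫ y, W y x ∂μ) * f x - (∫ y, W x y ∂μ) * f x) ∂μ :=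
          (integral_sub hintB' hintB).symm
      _ = ∫ x, f x * G x ∂μ := by
          refine integral_congr_ae (Filter.Eventually.of_forall fun x => ?_)
          simp only [hGdef]
          rw [integral_sub (hintW' x) (hintW x)]
          ring
  -- integrability helpers for the main argument
  have hcbd : |c| ≤ CV := by
    calc |c| ≤ ∫ x, |V x| ∂μ := by
          simpa using norm_integral_le_integral_norm (μ := μ) V
      _ ≤ ∫ _, CV ∂μ := integral_mono (intbdd μ hVmeas.aestronglyMeasurable hCV).abs
            (integrable_const _) (fun x => by simpa using hCV x)
      _ = CV := by simp
  constructor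
  · -- forward direction
    intro h
    set g : E → ℝ := fun x => G x - (V x - c) with hgdef
    have hgmeas : Measurable g := hGmeas.sub (hVmeas.sub measurable_const)
    have hgbd : ∀ x, |g x| ≤ CW + (CV + CV) := by
      intro x
      obtain ⟨a1, a2⟩ := abs_le.mp (hGbd x)
      obtain ⟨b1, b2⟩ := abs_le.mp (hCV x)
      obtain ⟨d1, d2⟩ := abs_le.mp hcbd
      rw [abs_le]
      constructor <;> simp only [hgdef] <;> linarith
    have hmain := h g hgmeas ⟨_, hgbd⟩
    rw [key g hgmeas _ hgbd] at hmain
    have hgint : Integrable g μ := intbdd μ hgmeas.aestronglyMeasurable hgbd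
    have hVgint : Integrable (fun x => V x * g x) μ := by
      refine intbdd μ (hVmeas.mul hgmeas).aestronglyMeasurable (C := CV * (CW + (CV + CV))) ?_
      intro x
      rw [abs_mul]
      exact mul_le_mul (hCV x) (hgbd x) (abs_nonneg _)
        (le_trans (abs_nonneg _) (hCV x0))
    have hrhs : ∫ x, g x * (V x - c) ∂μ = ∫ x, V x * g x ∂μ - (∫ x, g x ∂μ) * c := by
      have e : (fun x => g x * (V x - c)) = fun x => V x * g x - g x * c := by
        funext x; ring
      rw [e, integral_sub hVgint (hgint.mul_const _), integral_mul_const]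
    have hzero : ∫ x, g x * g x ∂μ = 0 := by
      have e : (fun x => g x * g x) = fun x => g x * G x - g x * (V x - c) := by
        funext x; simp only [hgdef]; ring
      have hgGint : Integrable (fun x => g x * G x) μ := by
        refine intbdd μ (hgmeas.mul hGmeas).aestronglyMeasurable
          (C := (CW + (CV + CV)) * CW) ?_
        intro x
        rw [abs_mul]
        exact mul_le_mul (hgbd x) (hGbd x) (abs_nonneg _)
          (le_trans (abs_nonneg _) (hgbd x0))
      have hgVcint : Integrable (fun x => g x * (V x - c)) μ := by
        have e2 : (fun x => g x * (V x - c)) = fun x => V x * g x - g x * c := by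
          funext x; ring
        rw [e2]
        exact hVgint.sub (hgint.mul_const _)
      rw [e, integral_sub hgGint hgVcint, hrhs, hmain, sub_self]
    have hsqint : Integrable (fun x => g x * g x) μ := by
      refine intbdd μ (hgmeas.mul hgmeas).aestronglyMeasurable
        (C := (CW + (CV + CV)) * (CW + (CV + CV))) ?_
      intro x
      rw [abs_mul]
      exact mul_le_mul (hgbd x) (hgbd x) (abs_nonneg _)
        (le_trans (abs_nonneg _) (hgbd x0))
    have hae : (fun x => g x * g x) =ᵐ[μ] 0 :=
      (integral_eq_zero_iff_of_nonneg (fun x => mul_self_nonneg (g x)) hsqint).mp hzero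
    filter_upwards [hae] with x hx
    have : g x = 0 := by
      have := mul_self_eq_zero.mp hx
      exact this
    have : G x - (V x - c) = 0 := this
    have : G x = V x - c := by linarith
    exact this
  · -- backward direction
    intro h f hfmeas hfbd
    obtain ⟨Cf, hCf⟩ := hfbd
    rw [key f hfmeas Cf hCf]
    have hstep : ∫ x, f x * G x ∂μ = ∫ x, f x * (V x - c) ∂μ := by
      refine integral_congr_ae ?_
      filter_upwards [h] with x hx
      rw [show G x = V x - c from hx]
    rw [hstep]
    have hfint : Integrable f μ := intbdd μ hfmeas.aestronglyMeasurable hCf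
    have hVfint : Integrable (fun x => V x * f x) μ := by
      refine intbdd μ (hVmeas.mul hfmeas).aestronglyMeasurable (C := CV * Cf) ?_
      intro x
      rw [abs_mul]
      exact mul_le_mul (hCV x) (hCf x) (abs_nonneg _)
        (le_trans (abs_nonneg _) (hCV x0))
    have e : (fun x => f x * (V x - c)) = fun x => V x * f x - f x * c := by
      funext x; ring
    rw [e, integral_sub hVfint (hfint.mul_const _), integral_mul_const]
end

section
/- With the setup of the previous context, if W̃(y,x) − W̃(x,y) = V(x) − V(y) for all x, y ∈ E, then for every probability measure μ on E and every bounded measurable f one has μ(L̃_μ(f)) = μ(V·f) − μ(f)·μ(V). -/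
/-!
Split `W x y * (f y - f x)` into a gain term `W x y * f y` and a loss term `W x y * f x`.
By Fubini the gain term integrates to the same value as `W y x * f x`, so the left-hand side is
`∫ f x * ∫ (W y x - W x y) dμ(y) dμ(x)`. Under the balance condition the inner integral equals
`V x - μ(V)`.
-/

open MeasureTheory

section

variable {α : Type*} [MeasurableSpace α] {μ : Measure α} [IsFiniteMeasure μ]

lemma integrable_of_abs_le {g : α → ℝ} (hg : Measurable g) {C : ℝ} (hC : ∀ x, |g x| ≤ C) :
    Integrable g μ :=
  .of_bound hg.aestronglyMeasurable C (ae_of_all _ hC)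

lemma integrable_mul_of_abs_le {g h : α → ℝ} (hg : Measurable g) (hh : Measurable h)
    {Cg Ch : ℝ} (hCg : ∀ x, |g x| ≤ Cg) (hCh : ∀ x, |h x| ≤ Ch) :
    Integrable (fun x => g x * h x) μ :=
  (integrable_of_abs_le hh hCh).bdd_mul hg.aestronglyMeasurable (ae_of_all _ hCg)

theorem integral_integral_mul_sub_eq_integral_mul_integral_sub {K : α → α → ℝ}
    (hK : Measurable (Function.uncurry K)) {CK : ℝ} (hCK : ∀ x y, |K x y| ≤ CK)
    {f : α → ℝ} (hf : Measurable f) {Cf : ℝ} (hCf : ∀ x, |f x| ≤ Cf) :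
    ∫ x, ∫ y, K x y * (f y - f x) ∂μ ∂μ = ∫ x, f x * ∫ y, (K y x - K x y) ∂μ ∂μ := by
  set gain : α × α → ℝ := fun p => K p.1 p.2 * f p.2
  set loss : α × α → ℝ := fun p => K p.1 p.2 * f p.1
  have hgain : Integrable gain (μ.prod μ) :=
    integrable_mul_of_abs_le hK (hf.comp measurable_snd) (fun p => hCK p.1 p.2) (fun p => hCf _)
  have hloss : Integrable loss (μ.prod μ) :=
    integrable_mul_of_abs_le hK (hf.comp measurable_fst) (fun p => hCK p.1 p.2) (fun p => hCf _)
  have hgain_swap : Integrable (fun p => gain p.swap) (μ.prod μ) :=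
    integrable_mul_of_abs_le (hK.comp measurable_swap) (hf.comp measurable_fst)
      (fun p => hCK p.2 p.1) (fun p => hCf _)
  calc ∫ x, ∫ y, K x y * (f y - f x) ∂μ ∂μ = ∫ p, gain p - loss p ∂μ.prod μ := by
        rw [integral_prod (fun p => gain p - loss p) (hgain.sub hloss)]
        simp only [gain, loss, mul_sub]
    _ = ∫ p, gain p.swap - loss p ∂μ.prod μ := by
        rw [integral_sub hgain hloss, integral_sub hgain_swap hloss, integral_prod_swap]
    _ = ∫ x, f x * ∫ y, (K y x - K x y) ∂μ ∂μ := by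
        rw [integral_prod (fun p => gain p.swap - loss p) (hgain_swap.sub hloss)]
        simp only [gain, loss, Prod.fst_swap, Prod.snd_swap, mul_comm _ (f _), ← mul_sub,
          integral_const_mul]

end

/-- If `W̃(y,x) - W̃(x,y) = V x - V y` for all `x, y`, then for every probability
measure `μ` and every bounded measurable `f`, `μ(L̃_μ f) = μ(V f) - μ(f) μ(V)`. -/
theorem stmt1 {E : Type*} [MeasurableSpace E]
    (V : E → ℝ) (hVmeas : Measurable V) (hVbd : ∃ C, ∀ x, |V x| ≤ C)
    (W : E → E → ℝ) (hWmeas : Measurable (Function.uncurry W))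
    (hWpos : ∀ x y, 0 ≤ W x y) (hWbd : ∃ C, ∀ x y, W x y ≤ C)
    (hW : ∀ x y, W y x - W x y = V x - V y) :
    ∀ (μ : Measure E), IsProbabilityMeasure μ →
      ∀ f : E → ℝ, Measurable f → (∃ C, ∀ x, |f x| ≤ C) →
        ∫ x, (∫ y, W x y * (f y - f x) ∂μ) ∂μ
          = ∫ x, V x * f x ∂μ - (∫ x, f x ∂μ) * (∫ x, V x ∂μ) := by
  intro μ _ f hf ⟨Cf, hCf⟩
  obtain ⟨CV, hCV⟩ := hVbd
  obtain ⟨CW, hCW⟩ := hWbd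
  have hWabs : ∀ x y, |W x y| ≤ CW := fun x y => (abs_of_nonneg (hWpos x y)).trans_le (hCW x y)
  have hinner : ∀ x, ∫ y, (W y x - W x y) ∂μ = V x - ∫ y, V y ∂μ := fun x => by
    simp only [hW x, integral_sub (integrable_const _) (integrable_of_abs_le hVmeas hCV),
      integral_const, probReal_univ, one_smul]
  rw [integral_integral_mul_sub_eq_integral_mul_integral_sub hWmeas hWabs hf hCf]
  simp only [hinner, mul_sub]
  rw [integral_sub (integrable_mul_of_abs_le hf hVmeas hCf hCV)
      ((integrable_of_abs_le hf hCf).mul_const _), integral_mul_const]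
  simp only [mul_comm (f _)]
end

section
/- Let m ≥ 0 be a real number with m ≤ N. Among all probability distributions (π_n)_{n=0}^N on {0,…,N} with mean Σ n π_n = m, the distribution supported on {⌊m⌋, ⌊m⌋+1} with π_{⌊m⌋+1} = m − ⌊m⌋ and π_{⌊m⌋} = ⌊m⌋ + 1 − m minimizes the second moment Σ n² π_n. -/
/-- among all probability distributions `π` on `{0,…,N}` with mean `m`, the
two-point distribution on `{⌊m⌋, ⌊m⌋+1}` with `π_{⌊m⌋+1} = m − ⌊m⌋`, `π_{⌊m⌋} = ⌊m⌋+1−m`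
minimizes the second moment `∑ n² π_n`. -/
theorem stmt8 (N : ℕ) (m : ℝ) (hm0 : 0 ≤ m) (hmN : m ≤ N)
    (π : ℕ → ℝ) (hπ : ∀ n, 0 ≤ π n)
    (hsum : ∑ n ∈ Finset.range (N + 1), π n = 1)
    (hmean : ∑ n ∈ Finset.range (N + 1), (n : ℝ) * π n = m) :
    (m - (⌊m⌋₊ : ℝ)) * ((⌊m⌋₊ : ℝ) + 1) ^ 2 + ((⌊m⌋₊ : ℝ) + 1 - m) * (⌊m⌋₊ : ℝ) ^ 2
      ≤ ∑ n ∈ Finset.range (N + 1), (n : ℝ) ^ 2 * π n := by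
  set K : ℕ := ⌊m⌋₊ with hK
  have key : ∀ n ∈ Finset.range (N + 1),
      ((2 * (K : ℝ) + 1) * n - K * (K + 1)) * π n ≤ (n : ℝ) ^ 2 * π n := by
    intro n _
    have h : (0:ℝ) ≤ ((n:ℝ) - K) * ((n:ℝ) - K - 1) := by
      rcases le_or_gt n K with h | h
      · have : (n:ℝ) ≤ K := by exact_mod_cast h
        nlinarith
      · have : (K:ℝ) + 1 ≤ n := by exact_mod_cast h
        apply mul_nonneg <;> linarith
    nlinarith [mul_nonneg h (hπ n)]
  have hsum2 : ∑ n ∈ Finset.range (N + 1), ((2 * (K : ℝ) + 1) * n - K * (K + 1)) * π n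
      = (2 * (K : ℝ) + 1) * m - K * (K + 1) := by
    have : ∀ n : ℕ, ((2 * (K : ℝ) + 1) * n - K * (K + 1)) * π n
        = (2 * (K : ℝ) + 1) * ((n : ℝ) * π n) - (K * (K + 1)) * π n := by
      intro n; ring
    simp only [this, Finset.sum_sub_distrib, ← Finset.mul_sum, hsum, hmean, mul_one]
  calc (m - (K : ℝ)) * ((K : ℝ) + 1) ^ 2 + ((K : ℝ) + 1 - m) * (K : ℝ) ^ 2
      = (2 * (K : ℝ) + 1) * m - K * (K + 1) := by ring
    _ = ∑ n ∈ Finset.range (N + 1), ((2 * (K : ℝ) + 1) * n - K * (K + 1)) * π n := hsum2.symm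
    _ ≤ _ := Finset.sum_le_sum key
end

section
/- Let L_c^N be the cloning generator on E^N with escape rates λ, jump kernel p, potential V ∈ C_b(E), constant c, and clone-size distribution π_{x,·} with mean M(x) = (V(x) − c)⁺/λ(x). Then for every mean-field observable F(x) = m(x)(f) with f ∈ C_b(E), L_c^N F(x) = m(x)(L̄_{m(x),c}(f)), where m(x) = (1/N)Σ δ_{x_i} is the empirical measure and L̄_{μ,c}(f)(x) = L(f)(x) + ∫_E ((V(x) − c)⁻ + (V(y) − c)⁺)(f(y) − f(x)) μ(dy). -/
/-!
Let the clone set be drawn by choosing its size `n` with probability `π n` and then a uniform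
subset of that size. Every particle then lies in it with probability `M / N`, `M` the mean size,
because `n * choose N n = N * choose (N - 1) (n - 1)`. So a clone event at `i` moves the
empirical mean of `f` by `(f y - f (x i)) / N` plus, on average, `M / N²` times
`∑ j, (f (x i) - f (x j))`, and killing `i` in favour of `j` moves it by `(f (x j) - f (x i)) / N`.
With `λ M = (V - c)⁺`, exchanging `i` and `j` in the double sum turns the clone terms into the
`(V(y) - c)⁺` part of the McKean selection rate; the killing terms give its `(V(x) - c)⁻` part.
-/

open MeasureTheory

/-- `x^{A,w;i,y}`: coordinate `i` replaced by `y`, coordinates in `A` (other than `i`)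
replaced by `w`. -/
def repl {E : Type*} {N : ℕ} (x : Fin N → E) (A : Finset (Fin N))
    (w : E) (i : Fin N) (y : E) : Fin N → E :=
  fun j => if j = i then y else if j ∈ A then w else x j

open Finset

section SubsetWeights

variable {α : Type*}

lemma sum_powerset_insert_filter_mem_apply_card [DecidableEq α] {M : Type*} [AddCommMonoid M]
    {s : Finset α} {a : α} (ha : a ∉ s) (F : ℕ → M) :
    ∑ t ∈ (insert a s).powerset with a ∈ t, F #t
      = ∑ m ∈ range (#s + 1), (#s).choose m • F (m + 1) := by
  rw [sum_filter, sum_powerset_insert ha, ← sum_powerset_apply_card]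
  have hout : ∀ t ∈ s.powerset, a ∉ t := fun t ht hat => ha (mem_powerset.1 ht hat)
  rw [sum_eq_zero fun t ht => if_neg (hout t ht), zero_add]
  exact sum_congr rfl fun t ht => by
    rw [if_pos (mem_insert_self a t), card_insert_of_notMem (hout t ht)]

lemma sum_div_choose_card [Fintype α] (π : ℕ → ℝ) :
    ∑ A : Finset α, π #A / (Fintype.card α).choose #A
      = ∑ n ∈ range (Fintype.card α + 1), π n := by
  rw [← powerset_univ, sum_powerset_apply_card (fun n => π n / (Fintype.card α).choose n),
    card_univ]
  refine sum_congr rfl fun n hn => ?_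
  have : ((Fintype.card α).choose n : ℝ) ≠ 0 :=
    Nat.cast_ne_zero.2 (Nat.choose_pos (Nat.lt_succ_iff.1 (mem_range.1 hn))).ne'
  rw [nsmul_eq_mul]
  field_simp

variable [Fintype α] [DecidableEq α]

lemma sum_filter_mem_div_choose_card (π : ℕ → ℝ) (a : α) :
    ∑ A with a ∈ A, π #A / (Fintype.card α).choose #A
      = (∑ n ∈ range (Fintype.card α + 1), n * π n) / Fintype.card α := by
  have hcard : Fintype.card α = #(univ.erase a) + 1 := by
    rw [card_erase_of_mem (mem_univ a), card_univ,
      Nat.sub_add_cancel (Fintype.card_pos_iff.2 ⟨a⟩)]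
  have huniv : (univ : Finset (Finset α)) = (insert a (univ.erase a)).powerset := by
    rw [insert_erase (mem_univ a), powerset_univ]
  rw [hcard, huniv,
    sum_powerset_insert_filter_mem_apply_card (notMem_erase a univ)
      (fun n => π n / ((#(univ.erase a) + 1).choose n : ℝ)),
    sum_range_succ' _ (#(univ.erase a) + 1), Nat.cast_zero, zero_mul, add_zero, sum_div]
  refine sum_congr rfl fun m hm => ?_
  have hchoose : ((#(univ.erase a) + 1).choose (m + 1) : ℝ) ≠ 0 :=
    Nat.cast_ne_zero.2 (Nat.choose_pos (by simpa using hm)).ne'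
  have hid := congrArg (Nat.cast : ℕ → ℝ) (Nat.add_one_mul_choose_eq (#(univ.erase a)) m)
  push_cast at hid
  rw [nsmul_eq_mul]
  field_simp
  push_cast
  linear_combination π (m + 1) * hid

lemma sum_div_choose_card_mul_sum (π : ℕ → ℝ) (g : α → ℝ) :
    ∑ A : Finset α, π #A / (Fintype.card α).choose #A * ∑ j ∈ A, g j
      = (∑ n ∈ range (Fintype.card α + 1), n * π n) / Fintype.card α * ∑ j, g j := by
  simp_rw [mul_sum]
  rw [sum_comm' (t' := univ) (s' := fun j => {A | j ∈ A}) (by simp)]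
  simp_rw [← sum_mul, sum_filter_mem_div_choose_card]

end SubsetWeights

section ParticleMoves

variable {E G : Type*} [AddCommGroup G]

lemma sum_comp_update {ι : Type*} [Fintype ι] [DecidableEq ι] (f : E → G) (x : ι → E) (i : ι)
    (v : E) : ∑ l, f (Function.update x i v l) = ∑ l, f (x l) + (f v - f (x i)) := by
  have h : ∀ l, f (Function.update x i v l) = f (x l) + if l = i then f v - f (x i) else 0 := by
    intro l
    rcases eq_or_ne l i with rfl | hl
    · simp
    · simp [hl]
  simp only [h, sum_add_distrib, sum_ite_eq', mem_univ, if_true]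

lemma sum_comp_repl_self {N : ℕ} (f : E → G) (x : Fin N → E) (A : Finset (Fin N)) (i : Fin N)
    (y : E) :
    ∑ j, f (repl x A (x i) i y j)
      = ∑ j, f (x j) + (f y - f (x i)) + ∑ j ∈ A, (f (x i) - f (x j)) := by
  have h : ∀ j, f (repl x A (x i) i y j) = f (x j) + (if j = i then f y - f (x i) else 0)
      + if j ∈ A then f (x i) - f (x j) else 0 := by
    intro j
    rcases eq_or_ne j i with rfl | hj
    · simp [repl]
    · by_cases hjA : j ∈ A <;> simp [repl, hj, hjA]
  simp only [h, sum_add_distrib, sum_ite_eq', mem_univ, if_true, sum_ite_mem, univ_inter]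

end ParticleMoves

lemma sum_div_choose_card_mul_repl_sub {E : Type*} {N : ℕ} (π : ℕ → ℝ) (f : E → ℝ)
    (x : Fin N → E) (i : Fin N) (y : E) :
    ∑ A : Finset (Fin N), (π A.card / (N.choose A.card : ℝ)) *
          ((∑ j, f (repl x A (x i) i y j)) / N - (∑ j, f (x j)) / N)
      = ((∑ n ∈ range (N + 1), π n) * (f y - f (x i))
          + (∑ n ∈ range (N + 1), n * π n) / N * ∑ j, (f (x i) - f (x j))) / N := by
  have hmass := sum_div_choose_card (α := Fin N) π
  have hmean := sum_div_choose_card_mul_sum (α := Fin N) π (fun j => f (x i) - f (x j))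
  rw [Fintype.card_fin] at hmass hmean
  simp_rw [sum_comp_repl_self, add_assoc, add_div _ (_ + _), add_sub_cancel_left, add_div,
    mul_add, sum_add_distrib, ← sum_mul, ← mul_div_assoc, ← sum_div, hmass, ← hmean]

lemma integral_sum_div_choose_card_mul_repl_sub {E : Type*} [MeasurableSpace E] {N : ℕ}
    (μ : Measure E) [IsProbabilityMeasure μ] (π : ℕ → ℝ)
    (hπ : ∑ n ∈ range (N + 1), π n = 1) (f : E → ℝ) (hf : Integrable f μ) (x : Fin N → E)
    (i : Fin N) :
    ∫ y, (∑ A : Finset (Fin N), (π A.card / (N.choose A.card : ℝ)) *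
          ((∑ j, f (repl x A (x i) i y j)) / N - (∑ j, f (x j)) / N)) ∂μ
      = 1 / N * ∫ y, (f y - f (x i)) ∂μ
          + 1 / N * (1 / N * ((∑ n ∈ range (N + 1), n * π n) * ∑ j, (f (x i) - f (x j)))) := by
  simp_rw [sum_div_choose_card_mul_repl_sub, hπ, one_mul]
  rw [integral_div, integral_add (f := fun y => f y - f (x i)) (hf.sub (integrable_const _))
    (integrable_const _), integral_const, probReal_univ, one_smul]
  ring

lemma sum_sum_mul_sub_comm {ι R : Type*} [Fintype ι] [CommRing R] (b g : ι → R) :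
    ∑ i, ∑ j, b j * (g j - g i) = ∑ i, b i * ∑ j, (g i - g j) := by
  rw [sum_comm]
  simp only [mul_sum]

theorem stmt10_general {E : Type*} [MeasurableSpace E] (N : ℕ)
    (lam : E → ℝ) (hlam : ∀ z, 0 < lam z)
    (p : E → Measure E) (hp : ∀ z, IsProbabilityMeasure (p z))
    (V : E → ℝ) (c : ℝ)
    (π : E → ℕ → ℝ)
    (hπsum : ∀ z, ∑ n ∈ Finset.range (N + 1), π z n = 1)
    (hmean : ∀ z, ∑ n ∈ Finset.range (N + 1), (n : ℝ) * π z n = max (V z - c) 0 / lam z)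
    (f : E → ℝ) (hf : ∀ z, Integrable f (p z))
    (x : Fin N → E) :
    (∑ i, lam (x i) * ∫ y, (∑ A : Finset (Fin N),
        (π (x i) A.card / (N.choose A.card : ℝ)) *
          ((∑ j, f (repl x A (x i) i y j)) / N - (∑ j, f (x j)) / N)) ∂(p (x i)))
      + (∑ i, max (-(V (x i) - c)) 0 *
          ((1 / N) * ∑ j, ((∑ l, f (Function.update x i (x j) l)) / N
            - (∑ l, f (x l)) / N)))
    = (1 / N) * ∑ i, (lam (x i) * ∫ y, (f y - f (x i)) ∂(p (x i))
        + (1 / N) * ∑ j, (max (-(V (x i) - c)) 0 + max (V (x j) - c) 0)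
            * (f (x j) - f (x i))) := by
  have hclone : ∀ i, lam (x i) * ∫ y, (∑ A : Finset (Fin N),
        (π (x i) A.card / (N.choose A.card : ℝ)) *
          ((∑ j, f (repl x A (x i) i y j)) / N - (∑ j, f (x j)) / N)) ∂(p (x i))
      = 1 / N * (lam (x i) * ∫ y, (f y - f (x i)) ∂(p (x i)))
          + 1 / N * (1 / N * (max (V (x i) - c) 0 * ∑ j, (f (x i) - f (x j)))) := fun i => by
    have := hp (x i)
    rw [integral_sum_div_choose_card_mul_repl_sub _ _ (hπsum _) f (hf _), hmean]
    linear_combination (1 / N * (1 / N) * ∑ j, (f (x i) - f (x j))) *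
      mul_div_cancel₀ (max (V (x i) - c) 0) (hlam (x i)).ne'
  have hkill : ∀ i, max (-(V (x i) - c)) 0 *
      ((1 / N) * ∑ j, ((∑ l, f (Function.update x i (x j) l)) / N - (∑ l, f (x l)) / N))
      = 1 / N * (1 / N * (max (-(V (x i) - c)) 0 * ∑ j, (f (x j) - f (x i)))) := fun i => by
    simp only [sum_comp_update, ← sub_div, add_sub_cancel_left, ← sum_div]
    ring
  simp only [hclone, hkill, mul_add, add_mul, sum_add_distrib, ← mul_sum, sum_sum_mul_sub_comm]
  ring

/-- Proposition 3.3: the cloning generator applied to a mean-field observable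
`F(x) = m(x)(f)` equals `m(x)(L̄_{m(x),c} f)` where `L̄_{μ,c}` is the McKean generator with
selection rates `W̃_c(x,y) = (V(x)−c)⁻ + (V(y)−c)⁺`, provided the clone-size mean is
`M(z) = (V(z)−c)⁺/λ(z)`. -/
theorem stmt10 {E : Type*} [MeasurableSpace E] (N : ℕ) (hN : 0 < N)
    (lam : E → ℝ) (hlam : ∀ z, 0 < lam z)
    (p : E → Measure E) (hp : ∀ z, IsProbabilityMeasure (p z))
    (V : E → ℝ) (c : ℝ)
    (π : E → ℕ → ℝ) (hπ0 : ∀ z n, 0 ≤ π z n)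
    (hπsum : ∀ z, ∑ n ∈ Finset.range (N + 1), π z n = 1)
    (hmean : ∀ z, ∑ n ∈ Finset.range (N + 1), (n : ℝ) * π z n = max (V z - c) 0 / lam z)
    (f : E → ℝ) (hf : ∀ z, Integrable f (p z))
    (x : Fin N → E) :
    (∑ i, lam (x i) * ∫ y, (∑ A : Finset (Fin N),
        (π (x i) A.card / (N.choose A.card : ℝ)) *
          ((∑ j, f (repl x A (x i) i y j)) / N - (∑ j, f (x j)) / N)) ∂(p (x i)))
      + (∑ i, max (-(V (x i) - c)) 0 *
          ((1 / N) * ∑ j, ((∑ l, f (Function.update x i (x j) l)) / N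
            - (∑ l, f (x l)) / N)))
    = (1 / N) * ∑ i, (lam (x i) * ∫ y, (f y - f (x i)) ∂(p (x i))
        + (1 / N) * ∑ j, (max (-(V (x i) - c)) 0 + max (V (x j) - c) 0)
            * (f (x j) - f (x i))) :=
  stmt10_general N lam hlam p hp V c π hπsum hmean f hf x
end

section
/- Under asymptotic stability with eigenvalue λ₀, eigenmeasure μ_∞ and constants α > 0, ρ ∈ (0,1) (i.e. ‖e^{−tλ₀}P^V(t)f − μ_∞(f)‖ ≤ ‖f‖αρ^t), define Φ_{t,T}(η)(f) = η(P^V(T−t)f)/η(P^V(T−t)1) for a probability measure η. Then for every ε ∈ (0,1) and every T − t ≥ (log ε − log α)/log ρ one has |Φ_{t,T}(η)(f) − μ_∞(f)| ≤ 2‖f‖·αρ^{T−t}/(1 − ε), uniformly in the probability measure η. -/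
open BoundedContinuousFunction

lemma stmt13_aux {E : Type*} [TopologicalSpace E] (L : (E →ᵇ ℝ) →ₗ[ℝ] ℝ) (hL1 : L 1 = 1)
    (hLpos : ∀ f : E →ᵇ ℝ, (∀ x, 0 ≤ f x) → 0 ≤ L f) (h : E →ᵇ ℝ) (m r : ℝ)
    (hb : ∀ x, |h x - m| ≤ r) : |L h - m| ≤ r := by
  have h1 : 0 ≤ L (r • (1 : E →ᵇ ℝ) - (h - m • (1 : E →ᵇ ℝ))) := by
    apply hLpos
    intro x
    have := abs_le.mp (hb x)
    simp only [BoundedContinuousFunction.coe_sub, BoundedContinuousFunction.coe_smul,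
      BoundedContinuousFunction.coe_one, Pi.sub_apply, Pi.smul_apply, Pi.one_apply,
      smul_eq_mul, mul_one]
    linarith [this.1, this.2]
  have h2 : 0 ≤ L ((h - m • (1 : E →ᵇ ℝ)) + r • (1 : E →ᵇ ℝ)) := by
    apply hLpos
    intro x
    have := abs_le.mp (hb x)
    simp only [BoundedContinuousFunction.coe_add, BoundedContinuousFunction.coe_sub,
      BoundedContinuousFunction.coe_smul, BoundedContinuousFunction.coe_one, Pi.add_apply,
      Pi.sub_apply, Pi.smul_apply, Pi.one_apply, smul_eq_mul, mul_one]
    linarith [this.1, this.2]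
  have e1 : L (r • (1 : E →ᵇ ℝ) - (h - m • (1 : E →ᵇ ℝ))) = r - (L h - m) := by
    simp [map_sub, map_smul, hL1, smul_eq_mul]
  have e2 : L ((h - m • (1 : E →ᵇ ℝ)) + r • (1 : E →ᵇ ℝ)) = (L h - m) + r := by
    simp [map_add, map_sub, map_smul, hL1, smul_eq_mul]
  rw [e1] at h1
  rw [e2] at h2
  rw [abs_le]
  constructor <;> linarith

/-- core estimate of Lemma 4.6: under asymptotic stability with constants
`α > 0`, `ρ ∈ (0,1)`, for `Φ_{t,T}(η)(f) = η(P^V(T−t)f)/η(P^V(T−t)1)` and every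
`ε ∈ (0,1)` and `T − t ≥ (log ε − log α)/log ρ`,
`|Φ_{t,T}(η)(f) − μ_∞(f)| ≤ 2‖f‖αρ^{T−t}/(1−ε)` uniformly over probability measures `η`. -/
theorem stmt13 {E : Type*} [TopologicalSpace E] [Nonempty E]
    (PV : ℝ → (E →ᵇ ℝ) →ₗ[ℝ] (E →ᵇ ℝ)) (lam0 : ℝ)
    (μinf : (E →ᵇ ℝ) →ₗ[ℝ] ℝ) (hμinf1 : μinf 1 = 1)
    (hμinfpos : ∀ f : E →ᵇ ℝ, (∀ x, 0 ≤ f x) → 0 ≤ μinf f)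
    (α ρ : ℝ) (hα : 0 < α) (hρ : ρ ∈ Set.Ioo (0 : ℝ) 1)
    (hstab : ∀ t : ℝ, 0 ≤ t → ∀ f : E →ᵇ ℝ,
      ‖Real.exp (-t * lam0) • PV t f - μinf f • (1 : E →ᵇ ℝ)‖ ≤ ‖f‖ * α * ρ ^ t)
    (η : (E →ᵇ ℝ) →ₗ[ℝ] ℝ) (hη1 : η 1 = 1)
    (hηpos : ∀ f : E →ᵇ ℝ, (∀ x, 0 ≤ f x) → 0 ≤ η f)
    (ε : ℝ) (hε : ε ∈ Set.Ioo (0 : ℝ) 1)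
    (t T : ℝ) (ht : 0 ≤ t) (htT : t ≤ T)
    (hgap : (Real.log ε - Real.log α) / Real.log ρ ≤ T - t)
    (f : E →ᵇ ℝ) :
    |η (PV (T - t) f) / η (PV (T - t) 1) - μinf f|
      ≤ 2 * ‖f‖ * α * ρ ^ (T - t) / (1 - ε) := by
  obtain ⟨hρ0, hρ1⟩ := hρ
  obtain ⟨hε0, hε1⟩ := hε
  set s : ℝ := T - t with hs_def
  have hs : 0 ≤ s := by simp [hs_def]; linarith
  have hρs : 0 < ρ ^ s := Real.rpow_pos_of_pos hρ0 s
  -- α ρ^s ≤ ε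
  have hlogρ : Real.log ρ < 0 := Real.log_neg hρ0 hρ1
  have hαρ : α * ρ ^ s ≤ ε := by
    have h1 : s * Real.log ρ ≤ Real.log ε - Real.log α := by
      have := (div_le_iff_of_neg hlogρ).mp hgap
      linarith [this]
    have h2 : Real.log (α * ρ ^ s) ≤ Real.log ε := by
      rw [Real.log_mul (ne_of_gt hα) (ne_of_gt hρs), Real.log_rpow hρ0]
      linarith
    calc α * ρ ^ s = Real.exp (Real.log (α * ρ ^ s)) :=
          (Real.exp_log (by positivity)).symm
      _ ≤ Real.exp (Real.log ε) := Real.exp_le_exp.mpr h2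
      _ = ε := Real.exp_log hε0
  set c : ℝ := Real.exp (-s * lam0) with hc_def
  have hc : 0 < c := Real.exp_pos _
  -- bound for f
  have hf : |η (c • PV s f) - μinf f| ≤ ‖f‖ * α * ρ ^ s := by
    apply stmt13_aux η hη1 hηpos
    intro x
    have hn := hstab s hs f
    have := BoundedContinuousFunction.norm_coe_le_norm
      (c • PV s f - μinf f • (1 : E →ᵇ ℝ)) x
    simp only [BoundedContinuousFunction.coe_sub, BoundedContinuousFunction.coe_smul,
      BoundedContinuousFunction.coe_one, Pi.sub_apply, Pi.smul_apply, Pi.one_apply,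
      smul_eq_mul, mul_one, Real.norm_eq_abs] at this
    calc |(c • PV s f) x - μinf f| = |c * (PV s f) x - μinf f| := by
          simp [smul_eq_mul]
      _ ≤ ‖f‖ * α * ρ ^ s := le_trans this hn
  -- bound for 1
  have h1 : |η (c • PV s 1) - 1| ≤ α * ρ ^ s := by
    have hb : |η (c • PV s 1) - μinf 1| ≤ ‖(1 : E →ᵇ ℝ)‖ * α * ρ ^ s := by
      apply stmt13_aux η hη1 hηpos
      intro x
      have hn := hstab s hs 1
      have := BoundedContinuousFunction.norm_coe_le_norm
        (c • PV s 1 - μinf 1 • (1 : E →ᵇ ℝ)) x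
      simp only [BoundedContinuousFunction.coe_sub, BoundedContinuousFunction.coe_smul,
        BoundedContinuousFunction.coe_one, Pi.sub_apply, Pi.smul_apply, Pi.one_apply,
        smul_eq_mul, mul_one, Real.norm_eq_abs] at this
      calc |(c • PV s 1) x - μinf 1| = |c * (PV s 1) x - μinf 1| := by
            simp [smul_eq_mul]
        _ ≤ ‖(1 : E →ᵇ ℝ)‖ * α * ρ ^ s := le_trans this hn
    have hone : ‖(1 : E →ᵇ ℝ)‖ = 1 := norm_one
    rwa [hμinf1, hone, one_mul] at hb
  have hμf : |μinf f| ≤ ‖f‖ := by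
    have := stmt13_aux μinf hμinf1 hμinfpos f 0 ‖f‖ (fun x => by
      simpa using f.norm_coe_le_norm x)
    simpa using this
  set A : ℝ := η (c • PV s f) with hA_def
  set B : ℝ := η (c • PV s 1) with hB_def
  have hB1 : 1 - ε ≤ B := by
    have := abs_le.mp h1
    linarith
  have hBpos : 0 < B := lt_of_lt_of_le (by linarith) hB1
  have hAB : η (PV s f) / η (PV s 1) = A / B := by
    rw [hA_def, hB_def, map_smul, map_smul, smul_eq_mul, smul_eq_mul,
      mul_div_mul_left _ _ (ne_of_gt hc)]
  rw [hAB]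
  have hnum : |A - μinf f * B| ≤ 2 * ‖f‖ * α * ρ ^ s := by
    have : A - μinf f * B = (A - μinf f) - μinf f * (B - 1) := by ring
    rw [this]
    calc |(A - μinf f) - μinf f * (B - 1)| ≤ |A - μinf f| + |μinf f * (B - 1)| :=
          abs_sub _ _
      _ = |A - μinf f| + |μinf f| * |B - 1| := by rw [abs_mul]
      _ ≤ ‖f‖ * α * ρ ^ s + ‖f‖ * (α * ρ ^ s) := by
          gcongr
      _ = 2 * ‖f‖ * α * ρ ^ s := by ring
  have : A / B - μinf f = (A - μinf f * B) / B := by field_simp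
  rw [this, abs_div, abs_of_pos hBpos]
  have h2f : 0 ≤ 2 * ‖f‖ * α * ρ ^ s := by positivity
  exact div_le_div₀ h2f hnum (by linarith) hB1
end

section
/- Let ξ_t be a cloning particle system with the extended generator including a cloning factor C_t^N, which at each combined clone/mutation event with clone-set size n updates C_t^N ↦ C_{t−}^N(1 + n/N), and at each killing event updates C_t^N ↦ C_{t−}^N(1 − 1/N). If the clone-size mean satisfies M(x) = (V_k(x) − c)⁺/λ̂_k(x), then applying the extended generator to G(x,ς) = ς yields L^{(N,⋆)}(G)(x,ς) = ς · m(x)(V_k − c), i.e. the expected logarithmic growth rate of the cloning factor equals the empirical mean of V_k − c. -/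
open MeasureTheory

lemma sumcard18 {N : ℕ} (f : ℕ → ℝ) :
    ∑ A : Finset (Fin N), f A.card = ∑ n ∈ Finset.range (N+1), (N.choose n : ℝ) * f n := by
  rw [← Finset.powerset_univ, Finset.sum_powerset]
  rw [Finset.card_univ, Fintype.card_fin]
  refine Finset.sum_congr rfl fun n hn => ?_
  rw [Finset.sum_congr rfl (fun t ht => by
      rw [(Finset.mem_powersetCard.mp ht).2]),
    Finset.sum_const, Finset.card_powersetCard, Finset.card_univ, Fintype.card_fin,
    nsmul_eq_mul]

/-- computation (5.15): applying the extended cloning generator to the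
coordinate projection `G(x,ς) = ς` of the cloning factor yields `ς · m(x)(V_k − c)`,
provided the clone-size mean is `M(z) = (V_k(z) − c)⁺/λ̂_k(z)`. The clone/mutation events
occur at rate `λ̂_k(x_i)` with jump `ς ↦ ς(1 + |A|/N)` (and mutation via the kernel `p`),
the killing events at rate `(V_k(x_i) − c)⁻/N` per pair with jump `ς ↦ ς(1 − 1/N)`. -/
theorem stmt18 {E : Type*} [MeasurableSpace E] (N : ℕ) (hN : 0 < N)
    (lamk : E → ℝ) (hlamk : ∀ z, 0 < lamk z)
    (p : E → Measure E) (hp : ∀ z, IsProbabilityMeasure (p z))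
    (Vk : E → ℝ) (c : ℝ)
    (π : E → ℕ → ℝ)
    (hmean : ∀ z, ∑ n ∈ Finset.range (N + 1), (n : ℝ) * π z n
      = max (Vk z - c) 0 / lamk z)
    (x : Fin N → E) (ς : ℝ) :
    (∑ i, lamk (x i) * ∫ _y, (∑ A : Finset (Fin N),
        (π (x i) A.card / (N.choose A.card : ℝ))
          * (ς * (1 + (A.card : ℝ) / N) - ς)) ∂(p (x i)))
      + (∑ i, (1 / N) * max (-(Vk (x i) - c)) 0 * ∑ _j : Fin N, (ς * (1 - 1 / N) - ς))
    = ς * ((1 / N) * ∑ i, (Vk (x i) - c)) := by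
  have hNr : (N : ℝ) ≠ 0 := Nat.cast_ne_zero.mpr hN.ne'
  have key : ∀ i : Fin N, (∑ A : Finset (Fin N),
      (π (x i) A.card / (N.choose A.card : ℝ)) * (ς * (1 + (A.card : ℝ) / N) - ς))
      = ς / N * (max (Vk (x i) - c) 0 / lamk (x i)) := by
    intro i
    rw [sumcard18 (fun n => π (x i) n / (N.choose n : ℝ) * (ς * (1 + (n:ℝ) / N) - ς)), ← hmean (x i), Finset.mul_sum]
    refine Finset.sum_congr rfl fun n hn => ?_
    have hc : (N.choose n : ℝ) ≠ 0 := by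
      exact_mod_cast (Nat.choose_pos (Nat.lt_succ_iff.mp (Finset.mem_range.mp hn))).ne'
    field_simp
    ring
  have hint : ∀ i : Fin N, (∫ _y, (∑ A : Finset (Fin N),
      (π (x i) A.card / (N.choose A.card : ℝ)) * (ς * (1 + (A.card : ℝ) / N) - ς)) ∂(p (x i)))
      = ς / N * (max (Vk (x i) - c) 0 / lamk (x i)) := by
    intro i
    rw [key i, integral_const]
    haveI := hp (x i)
    simp
  simp only [hint, Finset.sum_const, Finset.card_univ, Fintype.card_fin, nsmul_eq_mul]
  rw [← Finset.sum_add_distrib, Finset.mul_sum, Finset.mul_sum]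
  refine Finset.sum_congr rfl fun i _ => ?_
  have h1 : lamk (x i) * (ς / N * (max (Vk (x i) - c) 0 / lamk (x i)))
      = ς / N * max (Vk (x i) - c) 0 := by
    have hl := (hlamk (x i)).ne'
    field_simp
  have h2 : (N : ℝ) * (ς * (1 - 1 / N) - ς) = -ς := by field_simp; ring
  rw [h1, h2]
  have h3 : max (Vk (x i) - c) 0 - max (-(Vk (x i) - c)) 0 = Vk (x i) - c := by
    rcases le_total (Vk (x i) - c) 0 with h | h
    · rw [max_eq_right h, max_eq_left (by linarith)]; ring
    · rw [max_eq_left h, max_eq_right (by linarith)]; ring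
  have h4 : ς * (1 / N * (Vk (x i) - c))
      = ς / N * (max (Vk (x i) - c) 0 - max (-(Vk (x i) - c)) 0) := by
    rw [h3]; ring
  rw [h4]; ring
end
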